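/- arXiv:1506.07010 — 2 statements merged into one kernel-verified Lean document; each statement's English description precedes it below -/
import Mathlib

section
/- For every n ≥ 1 and k ≥ 0, the function S_{n,k} coincides on the half-plane {z ∈ ℂ : Re z > −1/2} with a polynomial of degree at most k; namely S_{n,k}(z) = T_{n,k}(z) there, where the polynomials T_{n,k} are defined recursively by T_{n,0}(z) = 1 and T_{n,k+1}(z) = (z(1+z)/n) · T_{n,k}′(z) + ((nz+k)/n) · T_{n,k}(z). -/
open MeasureTheory

/-- The Baskakov basis function `b_{n,v}(z) = C(n+v−1, v) · z^v / (1+z)^{n+v}`. -/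
noncomputable def baskakovBasis (n v : ℕ) (z : ℂ) : ℂ :=
  ((n + v - 1).choose v : ℂ) * z ^ v / (1 + z) ^ (n + v)

/-- The `k`-th moment of the Szász basis function `s_{n,v}`:
`∫_0^∞ e^{−nt} (nt)^v / v! · t^k dt`. -/
noncomputable def szaszMoment (n v k : ℕ) : ℝ :=
  ∫ t in Set.Ioi (0 : ℝ), Real.exp (-((n : ℝ) * t)) * ((n : ℝ) * t) ^ v / (v.factorial : ℝ) * t ^ k

/-- `S_{n,k}(z) = n · Σ_{v=1}^∞ b_{n,v}(z) · ∫_0^∞ s_{n,v−1}(t) t^k dt + (1+z)^{−n} · 0^k`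
(the last term appearing only for `k = 0`). -/
noncomputable def S (n k : ℕ) (z : ℂ) : ℂ :=
  (n : ℂ) * ∑' v : ℕ, baskakovBasis n (v + 1) z * (szaszMoment n v k : ℂ)
    + (1 + z) ^ (-(n : ℤ)) * (0 : ℂ) ^ k

/-- The polynomials `T_{n,k}` defined by `T_{n,0}(z) = 1` and
`T_{n,k+1}(z) = (z(1+z)/n) · T_{n,k}′(z) + ((nz+k)/n) · T_{n,k}(z)`. -/
noncomputable def T (n : ℕ) : ℕ → ℂ → ℂ
  | 0 => fun _ => 1
  | k + 1 => fun z =>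
      (z * (1 + z) / (n : ℂ)) * deriv (T n k) z + (((n : ℂ) * z + (k : ℂ)) / (n : ℂ)) * T n k z


/-!
Write `n = m + 1` and `x = z / (1 + z)`. The `v`-th summand of `S_{n,k}(z)`, including the factor
`n`, is `C(m+v+1, m) (v+k)! / (v! n^k) · x^(v+1) / (1 + z)^n`. Let `Λ_v` be the linear functional
`X^i ↦ C(m+v+1, m+i)` on `ℂ[X]`. Since `(n+i) C(m+v+1, m+i+1) = (v+1-i) C(m+v+1, m+i)`, `Λ_v`
turns `p ↦ X(1+X)p' + (nX+k)p` into multiplication by `v+k+1`, so the recursion defining `T_{n,k}`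
makes the coefficient above equal to `Λ_v(T_{n,k})`. The negative binomial series gives
`Σ_v Λ_v(X^i) x^(v+1) = z^i (1+z)^n - 0^i`, hence `Σ_v Λ_v(P) x^(v+1) = (1+z)^n P(z) - P(0)` for
every polynomial `P`; and `T_{n,k}(0) = 0^k` cancels the extra term of `S_{n,k}`. The series
converges when `|z| < |1 + z|`, i.e. `Re z > -1/2`.
-/

open Polynomial

open Nat Real Set in
theorem Real.integral_pow_mul_exp_neg_mul_Ioi (j : ℕ) {r : ℝ} (hr : 0 < r) :
    ∫ t in Ioi (0 : ℝ), t ^ j * exp (-(r * t)) = j ! / r ^ (j + 1) := by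
  have h := integral_rpow_mul_exp_neg_mul_Ioi (a := j + 1) (by positivity) hr
  simp only [add_sub_cancel_right, rpow_natCast, Gamma_nat_eq_factorial] at h
  rw [h, ← rpow_natCast, Nat.cast_add_one, div_rpow zero_le_one hr.le, one_rpow]
  ring

open Nat in
theorem szaszMoment_eq {n : ℕ} (hn : 0 < n) (v k : ℕ) :
    szaszMoment n v k = (v + k)! / (v ! * (n : ℝ) ^ (k + 1)) := by
  have hn' : (0 : ℝ) < n := Nat.cast_pos.mpr hn
  calc szaszMoment n v k
      = (n : ℝ) ^ v / v ! * ∫ t in Set.Ioi (0 : ℝ), t ^ (v + k) * Real.exp (-(n * t)) := by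
        rw [szaszMoment, ← integral_const_mul]
        refine setIntegral_congr_fun measurableSet_Ioi fun t _ => ?_
        ring
    _ = (v + k)! / (v ! * (n : ℝ) ^ (k + 1)) := by
        rw [Real.integral_pow_mul_exp_neg_mul_Ioi _ hn']
        field_simp
        ring

theorem Nat.cast_choose_succ_mul {R : Type*} [CommRing R] (N j : ℕ) :
    (N.choose (j + 1) : R) * (j + 1) = N.choose j * (N - j) := by
  rcases le_or_gt j N with h | h
  · have := congrArg (Nat.cast (R := R)) (Nat.choose_succ_right_eq N j)
    push_cast [h] at this
    exact this
  · simp [Nat.choose_eq_zero_of_lt h, Nat.choose_eq_zero_of_lt (h.trans (Nat.lt_succ_self j))]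

theorem Polynomial.natDegree_X_mul_derivative_le {R : Type*} [Semiring R] (p : R[X]) :
    (X * derivative p).natDegree ≤ p.natDegree := by
  by_cases hp : p.natDegree = 0
  · simp [derivative_of_natDegree_zero hp]
  · have := natDegree_derivative_lt hp
    have := natDegree_mul_le (p := (X : R[X])) (q := derivative p)
    have := natDegree_X_le (R := R)
    omega

noncomputable def baskakovStep (n k : ℕ) (p : ℂ[X]) : ℂ[X] :=
  X * (1 + X) * derivative p + (C (n : ℂ) * X + C (k : ℂ)) * p

noncomputable def baskakovPoly (n : ℕ) : ℕ → ℂ[X]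
  | 0 => 1
  | k + 1 => C (n : ℂ)⁻¹ * baskakovStep n k (baskakovPoly n k)

theorem T_eq_eval_baskakovPoly (n k : ℕ) : T n k = fun z => (baskakovPoly n k).eval z := by
  induction k with
  | zero => funext z; simp [T, baskakovPoly]
  | succ k ih =>
    funext z
    simp only [T, ih, Polynomial.deriv, baskakovPoly, baskakovStep, eval_mul, eval_add, eval_C,
      eval_X, eval_one]
    ring

theorem natDegree_baskakovStep_le (n k : ℕ) (p : ℂ[X]) :
    (baskakovStep n k p).natDegree ≤ p.natDegree + 1 := by
  rw [baskakovStep, mul_comm X, mul_assoc]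
  refine natDegree_add_le_of_degree_le (natDegree_mul_le.trans ?_) (natDegree_mul_le.trans ?_)
  · have := natDegree_X_mul_derivative_le p
    have : (1 + X : ℂ[X]).natDegree ≤ 1 := by compute_degree
    omega
  · have : (C (n : ℂ) * X + C (k : ℂ)).natDegree ≤ 1 := by compute_degree
    omega

theorem natDegree_baskakovPoly_le (n k : ℕ) : (baskakovPoly n k).natDegree ≤ k := by
  induction k with
  | zero => simp [baskakovPoly]
  | succ k ih =>
    have := natDegree_baskakovStep_le n k (baskakovPoly n k)
    exact (natDegree_C_mul_le _ _).trans (by omega)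

theorem eval_zero_baskakovPoly (n k : ℕ) : (baskakovPoly n k).eval 0 = 0 ^ k := by
  induction k with
  | zero => simp [baskakovPoly]
  | succ k ih => simp [baskakovPoly, baskakovStep, ih]; tauto

theorem baskakovStep_monomial (n k i : ℕ) (a : ℂ) :
    baskakovStep n k (monomial i a)
      = monomial i (a * (i + k)) + monomial (i + 1) (a * (n + i)) := by
  rw [baskakovStep]
  rcases i with _ | i
  · simp only [← C_mul_X_pow_eq_monomial, derivative_C_mul_X_pow, C_mul, C_add]
    simp
    ring
  · simp only [← C_mul_X_pow_eq_monomial, derivative_C_mul_X_pow, C_mul, C_add]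
    push_cast
    ring

/-- `Λ_v` for `n = m + 1`; indexing by `m` avoids the truncated subtraction `n - 1`. -/
noncomputable def choosePairing (m v : ℕ) : ℂ[X] →ₗ[ℂ] ℂ :=
  lsum fun i => ((m + v + 1).choose (m + i) : ℂ) • LinearMap.id

theorem choosePairing_monomial (m v i : ℕ) (a : ℂ) :
    choosePairing m v (monomial i a) = a * (m + v + 1).choose (m + i) := by
  simp [choosePairing, mul_comm]

theorem choosePairing_baskakovStep (m v k : ℕ) (p : ℂ[X]) :
    choosePairing m v (baskakovStep (m + 1) k p) = (v + k + 1) * choosePairing m v p := by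
  induction p using Polynomial.induction_on' with
  | add p q hp hq =>
    simp only [baskakovStep, mul_add, map_add] at hp hq ⊢
    linear_combination hp + hq
  | monomial i a =>
    have h := Nat.cast_choose_succ_mul (R := ℂ) (m + v + 1) (m + i)
    rw [baskakovStep_monomial, map_add, choosePairing_monomial, choosePairing_monomial,
      choosePairing_monomial, ← add_assoc m i 1]
    push_cast at h ⊢
    linear_combination a * h

open Nat in
theorem choosePairing_baskakovPoly (m v k : ℕ) :
    choosePairing m v (baskakovPoly (m + 1) k)
      = (v + k)! / (v ! * ((m + 1 : ℕ) : ℂ) ^ k) * (m + v + 1).choose m := by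
  induction k with
  | zero =>
    rw [baskakovPoly, ← monomial_zero_one, choosePairing_monomial]
    simp [(factorial_pos v).ne']
  | succ k ih =>
    rw [baskakovPoly, ← smul_eq_C_mul, map_smul, choosePairing_baskakovStep, ih, smul_eq_mul,
      ← add_assoc, factorial_succ]
    push_cast
    field_simp
    ring

theorem hasSum_choose_add_mul_pow {𝕜 : Type*} [NormedField 𝕜] [CompleteSpace 𝕜] (m i : ℕ)
    {x : 𝕜} (hx : ‖x‖ < 1) :
    HasSum (fun u => ((m + u).choose (m + i) : 𝕜) * x ^ u) (x ^ i / (1 - x) ^ (m + i + 1)) := by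
  have h := (hasSum_choose_mul_geometric_of_norm_lt_one (m + i) hx).mul_left (x ^ i)
  have shift : (fun w => ((m + (w + i)).choose (m + i) : 𝕜) * x ^ (w + i))
      = fun w => x ^ i * (((w + (m + i)).choose (m + i) : 𝕜) * x ^ w) := by
    funext w
    rw [add_left_comm, pow_add]
    ring
  rw [← hasSum_nat_add_iff' i, Finset.sum_eq_zero fun u hu => ?_, sub_zero, shift,
    div_eq_mul_one_div]
  · exact h
  · rw [Nat.choose_eq_zero_of_lt (by simpa using hu), Nat.cast_zero, zero_mul]

theorem one_add_ne_zero_of_norm_lt {z : ℂ} (hz : ‖z‖ < ‖1 + z‖) : 1 + z ≠ 0 :=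
  norm_pos_iff.mp ((norm_nonneg z).trans_lt hz)

theorem Complex.norm_lt_norm_one_add {z : ℂ} (hz : -1 / 2 < z.re) : ‖z‖ < ‖1 + z‖ := by
  refine lt_of_pow_lt_pow_left₀ 2 (norm_nonneg _) ?_
  rw [Complex.sq_norm, Complex.sq_norm, Complex.normSq_apply, Complex.normSq_apply]
  simp only [Complex.add_re, Complex.add_im, Complex.one_re, Complex.one_im]
  nlinarith

theorem hasSum_choosePairing_mul_pow (m : ℕ) (p : ℂ[X]) {z : ℂ} (hz : ‖z‖ < ‖1 + z‖) :
    HasSum (fun v => choosePairing m v p * (z / (1 + z)) ^ (v + 1))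
      ((1 + z) ^ (m + 1) * p.eval z - p.eval 0) := by
  induction p using Polynomial.induction_on' with
  | add p q hp hq =>
    convert hp.add hq using 1
    · simp only [map_add, add_mul]
    · simp only [eval_add]
      ring
  | monomial i a =>
    have hz₀ := one_add_ne_zero_of_norm_lt hz
    have hx : ‖z / (1 + z)‖ < 1 := by rwa [norm_div, div_lt_one (norm_pos_iff.mpr hz₀)]
    have h := ((hasSum_nat_add_iff' (G := ℂ) 1).mpr (hasSum_choose_add_mul_pow m i hx)).mul_left a
    have hchoose : (m.choose (m + i) : ℂ) = 0 ^ i := by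
      rcases i with _ | i
      · simp
      · simp [Nat.choose_eq_zero_of_lt]
    have hx' : 1 - z / (1 + z) = (1 + z)⁻¹ := by field_simp; ring
    have hval : (1 + z) ^ (m + 1) * (monomial i a).eval z - (monomial i a).eval 0
        = a * ((z / (1 + z)) ^ i / (1 - z / (1 + z)) ^ (m + i + 1)
          - ∑ u ∈ Finset.range 1, ((m + u).choose (m + i) : ℂ) * (z / (1 + z)) ^ u) := by
      simp only [eval_monomial, Finset.range_one, Finset.sum_singleton, add_zero, pow_zero,
        hchoose, hx', div_pow, inv_pow, div_inv_eq_mul]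
      field_simp
      ring
    rw [hval]
    exact h.congr_fun fun v => by rw [choosePairing_monomial, mul_assoc, add_assoc]

theorem mul_baskakovBasis_mul_szaszMoment (m v k : ℕ) {z : ℂ} (hz : 1 + z ≠ 0) :
    ((m + 1 : ℕ) : ℂ) * (baskakovBasis (m + 1) (v + 1) z * szaszMoment (m + 1) v k)
      = choosePairing m v (baskakovPoly (m + 1) k) * (z / (1 + z)) ^ (v + 1)
          / (1 + z) ^ (m + 1) := by
  rw [choosePairing_baskakovPoly, szaszMoment_eq m.succ_pos, baskakovBasis,
    show m + 1 + (v + 1) - 1 = m + v + 1 by omega,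
    show (m + v + 1).choose (v + 1) = (m + v + 1).choose m
      from (Nat.choose_symm_add (a := m) (b := v + 1)).symm]
  push_cast
  rw [pow_add (1 + z), div_pow]
  field_simp
  ring

theorem S_eq_eval_baskakovPoly (m k : ℕ) {z : ℂ} (hz : ‖z‖ < ‖1 + z‖) :
    S (m + 1) k z = (baskakovPoly (m + 1) k).eval z := by
  have hsum := (hasSum_choosePairing_mul_pow m (baskakovPoly (m + 1) k) hz).div_const
    ((1 + z) ^ (m + 1))
  rw [S, ← tsum_mul_left, tsum_congr fun v =>
      mul_baskakovBasis_mul_szaszMoment m v k (one_add_ne_zero_of_norm_lt hz),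
    hsum.tsum_eq, eval_zero_baskakovPoly, zpow_neg, zpow_natCast]
  field_simp [one_add_ne_zero_of_norm_lt hz]
  ring

/-- For `n ≥ 1` and `k ≥ 0`, `S_{n,k}` coincides on `{Re z > −1/2}` with the
polynomial `T_{n,k}`, which has degree at most `k`. -/
theorem S_eq_polynomial (n : ℕ) (hn : 1 ≤ n) (k : ℕ) :
    ∃ P : Polynomial ℂ, P.degree ≤ (k : ℕ) ∧ (∀ z : ℂ, T n k z = P.eval z) ∧
      ∀ z : ℂ, -1/2 < z.re → S n k z = T n k z := by
  obtain ⟨m, rfl⟩ := Nat.exists_eq_add_of_le' hn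
  refine ⟨baskakovPoly (m + 1) k, degree_le_of_natDegree_le (natDegree_baskakovPoly_le _ k),
    fun z => by rw [T_eq_eval_baskakovPoly], fun z hz => ?_⟩
  rw [S_eq_eval_baskakovPoly m k (Complex.norm_lt_norm_one_add hz), T_eq_eval_baskakovPoly]
end

section
/- Let f : D_R → ℂ, 1 < R < ∞, be analytic with f(z) = Σ_{k=0}^∞ c_k z^k on D_R, and suppose there exist M > 0 and A ∈ (1/R, 1) such that |c_k| ≤ M A^k / k! for all k ≥ 0. If 1 ≤ r < 1/A, then for all z with |z| ≤ r and all n ∈ ℕ with n > r + 2, the series L_n*(f)(z) = Σ_{k=0}^∞ c_k T_{n,k}(z) converges absolutely and |L_n*(f)(z)| ≤ M e^{Ar} + M (r+2) Σ_{k=0}^∞ (k+1)(Ar)^k < ∞. -/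
open Polynomial
open scoped Nat

namespace Polynomial

section NonnegCoeffs

variable {R : Type*} [Semiring R] [PartialOrder R] [IsOrderedRing R]

def nonnegCoeffs : Subsemiring R[X] where
  carrier := {p | ∀ i, 0 ≤ p.coeff i}
  mul_mem' {p q} hp hq i := by
    rw [coeff_mul]
    exact Finset.sum_nonneg fun x _ => mul_nonneg (hp _) (hq _)
  one_mem' i := by rw [coeff_one]; split_ifs <;> simp
  add_mem' hp hq i := by rw [coeff_add]; exact add_nonneg (hp i) (hq i)
  zero_mem' i := by simp

theorem C_mem_nonnegCoeffs {a : R} (ha : 0 ≤ a) : C a ∈ (nonnegCoeffs : Subsemiring R[X]) :=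
  fun i => by rw [coeff_C]; split_ifs <;> simp [ha]

theorem X_mem_nonnegCoeffs : (X : R[X]) ∈ nonnegCoeffs :=
  fun i => by rw [coeff_X]; split_ifs <;> simp

theorem derivative_mem_nonnegCoeffs {p : R[X]} (hp : p ∈ nonnegCoeffs) :
    derivative p ∈ nonnegCoeffs := fun i => by
  rw [coeff_derivative]
  exact mul_nonneg (hp _) (add_nonneg (Nat.cast_nonneg i) zero_le_one)

end NonnegCoeffs

section Semiring

variable {R : Type*} [Semiring R]

theorem coeff_X_mul_derivative (p : R[X]) (i : ℕ) :
    (X * derivative p).coeff i = i * p.coeff i := by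
  cases i with
  | zero => simp
  | succ i =>
    rw [coeff_X_mul, coeff_derivative, ← Nat.cast_succ]
    exact (Nat.cast_commute _ _).eq.symm

theorem natDegree_X_mul_derivative_le_s6 (p : R[X]) :
    (X * derivative p).natDegree ≤ p.natDegree := by
  by_cases h : p.natDegree = 0
  · rw [eq_C_of_natDegree_eq_zero h, derivative_C, mul_zero, natDegree_zero]
    exact Nat.zero_le _
  · have := natDegree_derivative_lt h
    exact (natDegree_mul_le_of_le natDegree_X_le le_rfl).trans (by omega)

end Semiring

section Real

variable {p q : ℝ[X]} {r : ℝ}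

theorem eval_nonneg_of_mem_nonnegCoeffs (hp : p ∈ nonnegCoeffs) (hr : 0 ≤ r) :
    0 ≤ p.eval r := by
  rw [eval_eq_sum_range]
  exact Finset.sum_nonneg fun i _ => mul_nonneg (hp i) (pow_nonneg hr i)

theorem eval_le_eval_of_coeff_le (hpq : ∀ i, p.coeff i ≤ q.coeff i) (hr : 0 ≤ r) :
    p.eval r ≤ q.eval r := by
  have : q - p ∈ nonnegCoeffs := fun i => by rw [coeff_sub]; exact sub_nonneg.mpr (hpq i)
  simpa using eval_nonneg_of_mem_nonnegCoeffs this hr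

theorem mul_eval_derivative_le (hp : p ∈ nonnegCoeffs) (hr : 0 ≤ r) :
    r * (derivative p).eval r ≤ p.natDegree * p.eval r := by
  have hl : r * (derivative p).eval r = (X * derivative p).eval r := by simp
  have hr' : p.natDegree * p.eval r = ((p.natDegree : ℝ[X]) * p).eval r := by simp
  rw [hl, hr']
  refine eval_le_eval_of_coeff_le (fun i => ?_) hr
  rw [coeff_X_mul_derivative, coeff_natCast_mul]
  by_cases hi : i ≤ p.natDegree
  · exact mul_le_mul_of_nonneg_right (by exact_mod_cast hi) (hp i)
  · simp [coeff_eq_zero_of_natDegree_lt (not_le.mp hi)]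

theorem norm_aeval_le_eval {A : Type*} [NormedDivisionRing A] [NormedAlgebra ℝ A]
    (hp : p ∈ nonnegCoeffs) {z : A} (hz : ‖z‖ ≤ r) : ‖aeval z p‖ ≤ p.eval r := by
  rw [aeval_eq_sum_range, eval_eq_sum_range]
  refine (norm_sum_le _ _).trans (Finset.sum_le_sum fun i _ => ?_)
  rw [norm_smul, Real.norm_of_nonneg (hp i), norm_pow]
  exact mul_le_mul_of_nonneg_left (pow_le_pow_left₀ (norm_nonneg z) hz i) (hp i)

end Real

end Polynomial

noncomputable def TPoly (n : ℕ) : ℕ → ℝ[X]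
  | 0 => 1
  | k + 1 => C (n : ℝ)⁻¹ *
      (X * (1 + X) * derivative (TPoly n k) + ((n : ℝ[X]) * X + (k : ℝ[X])) * TPoly n k)

theorem T_eq_aeval_TPoly (n k : ℕ) : T n k = fun z => aeval z (TPoly n k) := by
  induction k with
  | zero => funext z; simp [T, TPoly]
  | succ k ih =>
    funext z
    simp [T, TPoly, ih, Polynomial.deriv_aeval]
    ring

theorem TPoly_mem_nonnegCoeffs (n k : ℕ) : TPoly n k ∈ nonnegCoeffs := by
  induction k with
  | zero => exact one_mem _
  | succ k ih =>
    have hX := X_mem_nonnegCoeffs (R := ℝ)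
    refine mul_mem (C_mem_nonnegCoeffs (by positivity)) (add_mem ?_ ?_)
    · exact mul_mem (mul_mem hX (add_mem (one_mem _) hX)) (derivative_mem_nonnegCoeffs ih)
    · exact mul_mem (add_mem (mul_mem (natCast_mem _ n) hX) (natCast_mem _ k)) ih

theorem natDegree_TPoly_le (n k : ℕ) : (TPoly n k).natDegree ≤ k := by
  induction k with
  | zero => simp [TPoly]
  | succ k ih =>
    rw [TPoly]
    refine (natDegree_C_mul_le _ _).trans (natDegree_add_le_of_degree_le ?_ ?_)
    · rw [mul_comm X, mul_assoc]
      exact (natDegree_mul_le_of_le (m := 1) (by compute_degree!)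
        ((natDegree_X_mul_derivative_le_s6 _).trans ih)).trans_eq (add_comm 1 k)
    · exact (natDegree_mul_le_of_le (m := 1) (by compute_degree!) ih).trans_eq (add_comm 1 k)

theorem eval_TPoly_le {n : ℕ} {r : ℝ} (hr : 1 ≤ r) (hn : r + 2 ≤ n) (k : ℕ) :
    (TPoly n k).eval r ≤ k ! * r ^ k := by
  induction k with
  | zero => simp [TPoly]
  | succ k ih =>
    set E := (TPoly n k).eval r
    have hn0 : (0 : ℝ) < n := by linarith
    have hE : 0 ≤ E := eval_nonneg_of_mem_nonnegCoeffs (TPoly_mem_nonnegCoeffs n k) (by linarith)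
    have hk : (0 : ℝ) ≤ k := k.cast_nonneg
    have hD : r * (derivative (TPoly n k)).eval r ≤ k * E :=
      (mul_eval_derivative_le (TPoly_mem_nonnegCoeffs n k) (by linarith)).trans
        (mul_le_mul_of_nonneg_right (by exact_mod_cast natDegree_TPoly_le n k) hE)
    have hstep : (TPoly n (k + 1)).eval r ≤ (k + 1) * r * E := by
      simp only [TPoly, eval_mul, eval_C, eval_add, eval_natCast, eval_X, eval_one]
      rw [inv_mul_le_iff₀ hn0]
      -- with `D = P'(r)`: `r(1+r)D + (nr+k)E ≤ (1+r)kE + (nr+k)E = nrE + k(r+2)E ≤ n(k+1)rE`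
      nlinarith [mul_le_mul_of_nonneg_left hD (by linarith : (0 : ℝ) ≤ 1 + r),
        mul_nonneg (mul_nonneg hk hE) (by linarith : (0 : ℝ) ≤ n - (r + 2)),
        mul_nonneg (mul_nonneg hk hE) (mul_nonneg hn0.le (by linarith : (0 : ℝ) ≤ r - 1))]
    calc (TPoly n (k + 1)).eval r ≤ (k + 1) * r * E := hstep
      _ ≤ (k + 1) * r * (k ! * r ^ k) := by gcongr
      _ = (k + 1)! * r ^ (k + 1) := by push_cast [Nat.factorial_succ]; ring

theorem norm_T_le {n : ℕ} {r : ℝ} (hr : 1 ≤ r) (hn : r + 2 ≤ n) {z : ℂ} (hz : ‖z‖ ≤ r)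
    (k : ℕ) :
    ‖T n k z‖ ≤ k ! * r ^ k := by
  rw [T_eq_aeval_TPoly]
  exact (norm_aeval_le_eval (TPoly_mem_nonnegCoeffs n k) hz).trans (eval_TPoly_le hr hn k)

theorem tsum_geometric_le_tsum_succ_mul_geometric {x : ℝ} (hx₀ : 0 ≤ x) (hx₁ : x < 1) :
    ∑' k : ℕ, x ^ k ≤ ∑' k : ℕ, ((k : ℝ) + 1) * x ^ k := by
  have hx : ‖x‖ < 1 := by rwa [Real.norm_of_nonneg hx₀]
  refine (summable_geometric_of_lt_one hx₀ hx₁).tsum_le_tsum (fun k => ?_) ?_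
  · nlinarith [pow_nonneg hx₀ k, (k.cast_nonneg : (0 : ℝ) ≤ k)]
  · exact ((summable_pow_mul_geometric_of_norm_lt_one 1 hx).add
      (summable_geometric_of_lt_one hx₀ hx₁)).congr fun k => by ring

theorem Lstar_well_defined_general (c : ℕ → ℂ)
    (M A : ℝ) (hM : 0 < M)
    (hc : ∀ k : ℕ, ‖c k‖ ≤ M * A ^ k / (k.factorial : ℝ))
    (r : ℝ) (hr : 1 ≤ r) (hrA : r < 1 / A)
    (n : ℕ) (hn : r + 2 < (n : ℝ)) (z : ℂ) (hz : ‖z‖ ≤ r) :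
    Summable (fun k : ℕ => ‖c k * T n k z‖) ∧
      ‖∑' k : ℕ, c k * T n k z‖
        ≤ M * Real.exp (A * r) + M * (r + 2) * ∑' k : ℕ, ((k : ℝ) + 1) * (A * r) ^ k := by
  have hA : 0 < A := one_div_pos.mp (by linarith)
  have hAr₀ : 0 ≤ A * r := by positivity
  have hAr₁ : A * r < 1 := by rwa [lt_div_iff₀ hA, mul_comm] at hrA
  have hterm (k : ℕ) : ‖c k * T n k z‖ ≤ M * (A * r) ^ k :=
    calc ‖c k * T n k z‖ ≤ M * A ^ k / k ! * (k ! * r ^ k) := by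
          rw [norm_mul]; gcongr; exacts [hc k, norm_T_le hr hn.le hz k]
      _ = M * (A * r) ^ k := by field_simp; ring
  have hgeom := (summable_geometric_of_lt_one hAr₀ hAr₁).mul_left M
  have hsum := hgeom.of_nonneg_of_le (fun _ => norm_nonneg _) hterm
  refine ⟨hsum, ?_⟩
  calc ‖∑' k, c k * T n k z‖ ≤ ∑' k, ‖c k * T n k z‖ := norm_tsum_le_tsum_norm hsum
    _ ≤ ∑' k : ℕ, M * (A * r) ^ k := hsum.tsum_le_tsum hterm hgeom
    _ = M * ∑' k : ℕ, (A * r) ^ k := tsum_mul_left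
    _ ≤ M * ((r + 2) * ∑' k : ℕ, ((k : ℝ) + 1) * (A * r) ^ k) := by
        gcongr
        exact (tsum_geometric_le_tsum_succ_mul_geometric hAr₀ hAr₁).trans
          (le_mul_of_one_le_left (tsum_nonneg fun k => by positivity) (by linarith))
    _ ≤ _ := by nlinarith [Real.exp_pos (A * r)]

/-- For `f(z) = Σ c_k z^k` analytic on `D_R` (`1 < R`) with
`|c_k| ≤ M A^k/k!` (`M > 0`, `1/R < A < 1`), if `1 ≤ r < 1/A`, then for `|z| ≤ r` and
`n > r + 2`, the series `L_n*(f)(z) = Σ_k c_k T_{n,k}(z)` converges absolutely and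
`|L_n*(f)(z)| ≤ M e^{Ar} + M(r+2) Σ_{k=0}^∞ (k+1)(Ar)^k`. -/
theorem Lstar_well_defined (R : ℝ) (hR : 1 < R) (f : ℂ → ℂ) (c : ℕ → ℂ)
    (hf : ∀ z : ℂ, ‖z‖ < R → HasSum (fun k => c k * z ^ k) (f z))
    (M A : ℝ) (hM : 0 < M) (hA₁ : 1 / R < A) (hA₂ : A < 1)
    (hc : ∀ k : ℕ, ‖c k‖ ≤ M * A ^ k / (k.factorial : ℝ))
    (r : ℝ) (hr : 1 ≤ r) (hrA : r < 1 / A)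
    (n : ℕ) (hn : r + 2 < (n : ℝ)) (z : ℂ) (hz : ‖z‖ ≤ r) :
    Summable (fun k : ℕ => ‖c k * T n k z‖) ∧
      ‖∑' k : ℕ, c k * T n k z‖
        ≤ M * Real.exp (A * r) + M * (r + 2) * ∑' k : ℕ, ((k : ℝ) + 1) * (A * r) ^ k :=
  Lstar_well_defined_general c M A hM hc r hr hrA n hn z hz
end
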